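/- arXiv:1702.03471 — 4 statements merged into one kernel-verified Lean document; each statement's English description precedes it below -/
import Mathlib

section
/- Let λ > 4 and define F₁(b,g) = -b + λbg and F₂(b,g) = -g - λbg + λb(1-b-g). Then the system F₁(b,g)=0, F₂(b,g)=0 has exactly two solutions with (b,g) ∈ (0,1)×(0,1), namely g = 1/λ and b one of the two distinct roots of λ²b² - λ(λ-2)b + 1 = 0, both of which lie in (0,1). -/
/-!
Since `F₁ = b (λg - 1)` and `b > 0`, every interior equilibrium has `g = 1/λ`, and
there `F₂(b, 1/λ) = -(λ²b² - λ(λ-2)b + 1)/λ`. With `s = √(λ² - 4λ)` this quadratic factors as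
`λ² (b - (λ-2-s)/(2λ)) (b - (λ-2+s)/(2λ))`, and for `λ > 4` we have `0 < s < λ - 2`,
which puts both roots in `(0,1)` and makes them distinct.
-/

open Real Set

section
variable {lam : ℝ}

lemma drift_eq_zero_iff (hlam : lam ≠ 0) {b g : ℝ} (hb : b ≠ 0) :
    (-b + lam * b * g = 0 ∧ -g - lam * b * g + lam * b * (1 - b - g) = 0) ↔
      (g = 1 / lam ∧ lam ^ 2 * b ^ 2 - lam * (lam - 2) * b + 1 = 0) := by
  have hF₁ : -b + lam * b * g = 0 ↔ g = 1 / lam := by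
    rw [show -b + lam * b * g = b * (lam * g - 1) by ring, mul_eq_zero, sub_eq_zero,
      eq_div_iff hlam, mul_comm]
    simp [hb]
  rw [hF₁]
  refine and_congr_right fun hg => ?_
  have hF₂ : -g - lam * b * g + lam * b * (1 - b - g) =
      -(lam ^ 2 * b ^ 2 - lam * (lam - 2) * b + 1) / lam := by
    subst hg; field_simp; ring
  rw [hF₂, div_eq_zero_iff, neg_eq_zero]
  simp [hlam]

lemma quadratic_eq_sq_mul_sub_mul_sub (hlam : lam ≠ 0) {s : ℝ}
    (hs : s ^ 2 = lam ^ 2 - 4 * lam) (b : ℝ) :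
    lam ^ 2 * b ^ 2 - lam * (lam - 2) * b + 1 =
      lam ^ 2 * ((b - (lam - 2 - s) / (2 * lam)) * (b - (lam - 2 + s) / (2 * lam))) := by
  field_simp
  linear_combination hs

lemma sqrt_sq_sub_four_mul_lt (hl : 4 < lam) : √(lam ^ 2 - 4 * lam) < lam - 2 := by
  rw [sqrt_lt' (by linarith)]
  nlinarith

lemma add_div_two_mul_mem_Ioo {t : ℝ} (ht : |t| < lam - 2) :
    (lam - 2 + t) / (2 * lam) ∈ Ioo (0 : ℝ) 1 := by
  obtain ⟨ht₁, ht₂⟩ := abs_lt.1 ht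
  have hlam : 0 < 2 * lam := by linarith
  exact ⟨div_pos (by linarith) hlam, (div_lt_one hlam).2 (by linarith)⟩

end

theorem stmt_1 (lam : ℝ) (hl : 4 < lam) :
    ∃ b₁ b₂ : ℝ, b₁ ≠ b₂ ∧ b₁ ∈ Set.Ioo (0:ℝ) 1 ∧ b₂ ∈ Set.Ioo (0:ℝ) 1 ∧
      lam ^ 2 * b₁ ^ 2 - lam * (lam - 2) * b₁ + 1 = 0 ∧
      lam ^ 2 * b₂ ^ 2 - lam * (lam - 2) * b₂ + 1 = 0 ∧
      ∀ b g : ℝ, b ∈ Set.Ioo (0:ℝ) 1 → g ∈ Set.Ioo (0:ℝ) 1 →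
        ((-b + lam * b * g = 0 ∧ -g - lam * b * g + lam * b * (1 - b - g) = 0)
          ↔ (g = 1 / lam ∧ (b = b₁ ∨ b = b₂))) := by
  have hlam : lam ≠ 0 := by positivity
  set s := √(lam ^ 2 - 4 * lam)
  have hs_sq : s ^ 2 = lam ^ 2 - 4 * lam := sq_sqrt (by nlinarith)
  have hs_pos : 0 < s := sqrt_pos.2 (by nlinarith)
  have hs_lt : s < lam - 2 := sqrt_sq_sub_four_mul_lt hl
  have hfac := quadratic_eq_sq_mul_sub_mul_sub hlam hs_sq
  refine ⟨(lam - 2 - s) / (2 * lam), (lam - 2 + s) / (2 * lam), ?_, ?_,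
    add_div_two_mul_mem_Ioo (by rwa [abs_of_pos hs_pos]), by rw [hfac]; ring,
    by rw [hfac]; ring, fun b g hb _ => ?_⟩
  · rw [Ne, div_left_inj' (by positivity)]
    linarith
  · simpa [sub_eq_add_neg] using
      add_div_two_mul_mem_Ioo (t := -s) (by rwa [abs_neg, abs_of_pos hs_pos])
  · rw [drift_eq_zero_iff hlam hb.1.ne', hfac, mul_eq_zero, mul_eq_zero, sub_eq_zero, sub_eq_zero]
    simp [hlam]
end

section
/- For λ > 4, there exists a point (b,g) with b > 0, g > 0, b+g < 1 such that F₁(b,g) > 0 and F₂(b,g) > 0, where F₁(b,g) = -b + λbg and F₂(b,g) = -g - λbg + λb(1-b-g). -/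
theorem stmt_3 (lam : ℝ) (hl : 4 < lam) :
    ∃ b g : ℝ, 0 < b ∧ 0 < g ∧ b + g < 1 ∧
      0 < -b + lam * b * g ∧
      0 < -g - lam * b * g + lam * b * (1 - b - g) := by
  have h0 : (0:ℝ) < lam := by linarith
  have h1 : (0:ℝ) < lam - 1 := by linarith
  refine ⟨(lam - 2) / (2 * lam), 1 / lam + (lam - 4) / (8 * (lam - 1)), ?_, ?_, ?_, ?_, ?_⟩
  · exact div_pos (by linarith) (by linarith)
  · have : (0:ℝ) < (lam-4)/(8*(lam-1)) := div_pos (by linarith) (by linarith)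
    have : (0:ℝ) < 1/lam := by positivity
    linarith
  · rw [div_add_div _ _ (by positivity) (by positivity), div_add_div _ _ (by positivity) (by positivity),
      div_lt_one (by positivity)]
    nlinarith [sq_nonneg lam, sq_nonneg (lam - 4), mul_pos h0 h1]
  · have : -((lam - 2) / (2 * lam)) + lam * ((lam - 2) / (2 * lam)) * (1 / lam + (lam - 4) / (8 * (lam - 1)))
        = (lam - 2) * (lam - 4) / (16 * (lam - 1)) := by
      field_simp
      ring
    rw [this]
    exact div_pos (by nlinarith) (by linarith)
  · have key : -(1 / lam + (lam - 4) / (8 * (lam - 1))) - lam * ((lam - 2) / (2 * lam)) * (1 / lam + (lam - 4) / (8 * (lam - 1)))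
        + lam * ((lam - 2) / (2 * lam)) * (1 - (lam - 2) / (2 * lam) - (1 / lam + (lam - 4) / (8 * (lam - 1))))
        = (lam - 4) / 8 := by
      field_simp
      ring
    rw [key]
    linarith
end

section
/- For 0 < λ < 4, the maximum of the function b ↦ λb(1-b)/(2λb+1) over b ∈ [0,1] is strictly less than 1/λ. -/
theorem stmt_5 (lam : ℝ) (hl0 : 0 < lam) (hl4 : lam < 4) :
    ∀ b ∈ Set.Icc (0:ℝ) 1, lam * b * (1 - b) / (2 * lam * b + 1) < 1 / lam := by
  rintro b ⟨hb0, hb1⟩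
  have hd : 0 < 2 * lam * b + 1 := by nlinarith
  rw [div_lt_div_iff₀ hd hl0]
  nlinarith [sq_nonneg (2 * lam * b + 2 - lam), mul_pos hl0 (sub_pos.2 hl4)]
end

section
/- Let 0 < λ < 4 and let (b_t, g_t) be the solution of the ODE b' = -b + λbg, g' = -g - λbg + λb(1-b-g) with initial condition (b₀,g₀) = (1,0), taking values in the simplex Λ = {b ≥ 0, g ≥ 0, b+g ≤ 1}. Then |b_t| + |g_t| → 0 as t → ∞. -/
/-!
Write `s = b + g`. The ratios `w = s² / b` and `u = g / b` obey
`w' = -w + λ s (2 - s - w)`, `u' = λ (1 - w)` and `s (1 + u) = w`. For `λ < 4` there is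
`q < 1` with `λ x (2 - x) ≤ q (1 + λ x)` for all `x`, which makes `q + (1 - q) e⁻ᵗ` an upper
barrier for `w`.
Then `u' ≥ λ (1 - q) (1 - e⁻ᵗ)`, so `u` grows linearly and `s ≤ 1 / (1 + u) → 0`.
-/

open Real Set Filter

theorem image_le_of_deriv_lt_deriv_boundary_Ici {f f' B B' : ℝ → ℝ} {a : ℝ}
    (hf : ∀ t ≥ a, HasDerivAt f (f' t) t) (hB : ∀ t ≥ a, HasDerivAt B (B' t) t)
    (ha : f a ≤ B a) (bound : ∀ t ≥ a, f t = B t → f' t < B' t) :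
    ∀ t ≥ a, f t ≤ B t := fun _ ht =>
  image_le_of_deriv_right_lt_deriv_boundary'
    (fun x hx => (hf x hx.1).continuousAt.continuousWithinAt)
    (fun x hx => (hf x hx.1).hasDerivWithinAt) ha
    (fun x hx => (hB x hx.1).continuousAt.continuousWithinAt)
    (fun x hx => (hB x hx.1).hasDerivWithinAt) (fun x hx => bound x hx.1) ⟨ht, le_rfl⟩

theorem image_le_of_deriv_le_deriv_Ici {f f' B B' : ℝ → ℝ} {a : ℝ}
    (hf : ∀ t ≥ a, HasDerivAt f (f' t) t) (hB : ∀ t ≥ a, HasDerivAt B (B' t) t)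
    (ha : f a ≤ B a) (bound : ∀ t ≥ a, f' t ≤ B' t) :
    ∀ t ≥ a, f t ≤ B t := fun _ ht =>
  image_le_of_deriv_right_le_deriv_boundary
    (fun x hx => (hf x hx.1).continuousAt.continuousWithinAt)
    (fun x hx => (hf x hx.1).hasDerivWithinAt) ha
    (fun x hx => (hB x hx.1).continuousAt.continuousWithinAt)
    (fun x hx => (hB x hx.1).hasDerivWithinAt) (fun x hx => bound x hx.1) ⟨ht, le_rfl⟩

theorem exists_lt_one_forall_mul_two_sub_le {lam : ℝ} (hl0 : 0 ≤ lam) (hl4 : lam < 4) :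
    ∃ q < 1, ∀ x : ℝ, lam * x * (2 - x) ≤ q * (1 + lam * x) := by
  -- The discriminant `lam * (lam * (2 - q) ^ 2 - 4 * q)` is negative for `q` close to `1`.
  refine ⟨1 - (4 - lam) / 16, by linarith, fun x => ?_⟩
  have h4 : 0 < 4 - lam := by linarith
  nlinarith [mul_nonneg hl0 (sq_nonneg (x - (1 + (4 - lam) / 16) / 2)),
    mul_pos h4 h4, mul_pos (mul_pos h4 h4) h4]

namespace SemiInfected

structure IsSolution (lam : ℝ) (b g : ℝ → ℝ) : Prop where
  hasDerivAt_b : ∀ t ≥ (0 : ℝ), HasDerivAt b (-b t + lam * b t * g t) t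
  hasDerivAt_g : ∀ t ≥ (0 : ℝ),
    HasDerivAt g (-g t - lam * b t * g t + lam * b t * (1 - b t - g t)) t
  mem_simplex : ∀ t ≥ (0 : ℝ), 0 ≤ b t ∧ 0 ≤ g t ∧ b t + g t ≤ 1

noncomputable def sqRatio (b g : ℝ → ℝ) (t : ℝ) : ℝ := (b t + g t) ^ 2 / b t

noncomputable def ratio (b g : ℝ → ℝ) (t : ℝ) : ℝ := g t / b t

theorem add_mul_one_add_ratio {b g : ℝ → ℝ} {t : ℝ} (hbt : b t ≠ 0) :
    (b t + g t) * (1 + ratio b g t) = sqRatio b g t := by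
  unfold ratio sqRatio
  field_simp

variable {lam : ℝ} {b g : ℝ → ℝ}

namespace IsSolution

theorem b_pos (h : IsSolution lam b g) (hl0 : 0 ≤ lam) (hb0 : 0 < b 0) :
    ∀ t ≥ (0 : ℝ), 0 < b t := by
  have hgrowth : ∀ t ≥ (0 : ℝ), b 0 ≤ b t * exp t := by
    refine image_le_of_deriv_le_deriv_Ici (fun t _ => hasDerivAt_const t (b 0))
      (fun t ht => (h.hasDerivAt_b t ht).mul (hasDerivAt_exp t)) (by simp) fun t ht => ?_
    obtain ⟨hbt, hgt, -⟩ := h.mem_simplex t ht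
    nlinarith [mul_nonneg (mul_nonneg (mul_nonneg hl0 hbt) hgt) (exp_pos t).le]
  intro t ht
  by_contra! hbt
  nlinarith [hgrowth t ht, exp_pos t]

theorem hasDerivAt_sqRatio (h : IsSolution lam b g) {t : ℝ} (ht : 0 ≤ t) (hbt : 0 < b t) :
    HasDerivAt (sqRatio b g) (-sqRatio b g t
      + lam * (b t + g t) * (2 - (b t + g t) - sqRatio b g t)) t := by
  have := (((h.hasDerivAt_b t ht).add (h.hasDerivAt_g t ht)).pow 2).div (h.hasDerivAt_b t ht)
    hbt.ne'
  refine this.congr_deriv ?_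
  simp only [sqRatio, Pi.add_apply, Pi.pow_apply]
  field_simp
  ring

theorem hasDerivAt_ratio (h : IsSolution lam b g) {t : ℝ} (ht : 0 ≤ t) (hbt : 0 < b t) :
    HasDerivAt (ratio b g) (lam * (1 - sqRatio b g t)) t := by
  refine ((h.hasDerivAt_g t ht).div (h.hasDerivAt_b t ht) hbt.ne').congr_deriv ?_
  unfold sqRatio
  field_simp
  ring

theorem sqRatio_le (h : IsSolution lam b g) (hl0 : 0 < lam) {q : ℝ} (hq1 : q < 1)
    (hq : ∀ x : ℝ, lam * x * (2 - x) ≤ q * (1 + lam * x))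
    (hpos : ∀ t ≥ (0 : ℝ), 0 < b t) (hw0 : sqRatio b g 0 ≤ 1) :
    ∀ t ≥ (0 : ℝ), sqRatio b g t ≤ q + (1 - q) * exp (-t) := by
  refine image_le_of_deriv_lt_deriv_boundary_Ici (fun t ht => h.hasDerivAt_sqRatio ht (hpos t ht))
    (fun t _ => ((hasDerivAt_neg t).exp.const_mul (1 - q)).const_add q) (by simpa using hw0)
    fun t ht hwt => ?_
  -- At contact `w = q + (1 - q) e⁻ᵗ > q`, and `hq` gives `w' ≤ q - w - λ s (w - q) < q - w`.
  have hs : 0 < b t + g t := by linarith [hpos t ht, (h.mem_simplex t ht).2.1]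
  have hgap : 0 < sqRatio b g t - q := by rw [hwt]; nlinarith [exp_pos (-t)]
  nlinarith [hq (b t + g t), mul_pos (mul_pos hl0 hs) hgap]

theorem tendsto_ratio_atTop (h : IsSolution lam b g) (hl0 : 0 < lam) {q : ℝ} (hq1 : q < 1)
    (hpos : ∀ t ≥ (0 : ℝ), 0 < b t)
    (hw : ∀ t ≥ (0 : ℝ), sqRatio b g t ≤ q + (1 - q) * exp (-t)) :
    Tendsto (ratio b g) atTop atTop := by
  set C := lam * (1 - q)
  have hC : 0 < C := mul_pos hl0 (by linarith)
  have hlin : ∀ t ≥ (0 : ℝ), C * (t - 1 + exp (-t)) ≤ ratio b g t := by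
    refine image_le_of_deriv_le_deriv_Ici (f' := fun t => C * (1 - exp (-t)))
      (fun t _ => ?_) (fun t ht => h.hasDerivAt_ratio ht (hpos t ht)) ?_ fun t ht => ?_
    · exact ((((hasDerivAt_id t).sub_const 1).add (hasDerivAt_neg t).exp).const_mul C).congr_deriv
        (by ring)
    · simpa [ratio] using div_nonneg (h.mem_simplex 0 le_rfl).2.1 (hpos 0 le_rfl).le
    · nlinarith [mul_le_mul_of_nonneg_left (hw t ht) hl0.le]
  refine tendsto_atTop_mono' atTop ?_
    (tendsto_atTop_add_const_right atTop (-C) (tendsto_id.const_mul_atTop hC))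
  filter_upwards [eventually_ge_atTop 0] with t ht
  simp only [id]
  nlinarith [hlin t ht, exp_pos (-t)]

end IsSolution

theorem add_le_inv_one_add_ratio {b g : ℝ → ℝ} {t : ℝ} (hbt : 0 < b t) (hgt : 0 ≤ g t)
    (hw : sqRatio b g t ≤ 1) : b t + g t ≤ (1 + ratio b g t)⁻¹ := by
  have hu : 0 < 1 + ratio b g t := by unfold ratio; positivity
  rw [← one_div, le_div_iff₀ hu, add_mul_one_add_ratio hbt.ne']
  exact hw

end SemiInfected

theorem stmt_11 (lam : ℝ) (hl0 : 0 < lam) (hl4 : lam < 4) (b g : ℝ → ℝ)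
    (hb : ∀ t ≥ (0:ℝ), HasDerivAt b (-b t + lam * b t * g t) t)
    (hg : ∀ t ≥ (0:ℝ), HasDerivAt g
      (-g t - lam * b t * g t + lam * b t * (1 - b t - g t)) t)
    (hΛ : ∀ t ≥ (0:ℝ), 0 ≤ b t ∧ 0 ≤ g t ∧ b t + g t ≤ 1)
    (hb0 : b 0 = 1) (hg0 : g 0 = 0) :
    Filter.Tendsto (fun t => |b t| + |g t|) Filter.atTop (nhds 0) := by
  have h : SemiInfected.IsSolution lam b g := ⟨hb, hg, hΛ⟩
  obtain ⟨q, hq1, hq⟩ := exists_lt_one_forall_mul_two_sub_le hl0.le hl4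
  have hpos := h.b_pos hl0.le (by simp [hb0])
  have hw := h.sqRatio_le hl0 hq1 hq hpos (by simp [SemiInfected.sqRatio, hb0, hg0])
  have hu := h.tendsto_ratio_atTop hl0 hq1 hpos hw
  refine tendsto_of_tendsto_of_tendsto_of_le_of_le' tendsto_const_nhds
    (tendsto_atTop_add_const_left atTop 1 hu).inv_tendsto_atTop
    (Eventually.of_forall fun t => by positivity) ?_
  filter_upwards [eventually_ge_atTop 0] with t ht
  obtain ⟨hbt, hgt, -⟩ := hΛ t ht
  rw [abs_of_nonneg hbt, abs_of_nonneg hgt]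
  refine SemiInfected.add_le_inv_one_add_ratio (hpos t ht) hgt ((hw t ht).trans ?_)
  nlinarith [exp_le_one_iff.2 (neg_nonpos.2 ht)]
end
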